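/- The sequence u : ℕ → ℚ defined by u_n = Π_{k=1}^{n} k! (the product of the first n factorials, with u_0 = 1) is not P-recursive: there do not exist r ∈ ℕ and polynomials p₀,…,p_r ∈ ℚ[x], not all zero, such that p₀(n)·u_n + p₁(n)·u_{n+1} + ⋯ + p_r(n)·u_{n+r} = 0 for all n ∈ ℕ. -/

import Mathlib

/-- A sequence `u : ℕ → ℚ` is P-recursive if it satisfies a nontrivial linear
recurrence with polynomial coefficients. -/
def IsPRecursive (u : ℕ → ℚ) : Prop :=
  ∃ (r : ℕ) (p : Fin (r + 1) → Polynomial ℚ),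
    (∃ i, p i ≠ 0) ∧
    ∀ n : ℕ, ∑ i : Fin (r + 1), Polynomial.eval (n : ℚ) (p i) * u (n + (i : ℕ)) = 0

/-!
Let `p_j` be the last nonzero coefficient of a recurrence. Since the terms of the recurrence sum
to zero, `|p_j(n)| u_{n+j} ≤ ∑_{i<j} |p_i(n)| u_{n+i}`. For the superfactorials
`(n+1)! u_{n+i} ≤ u_{n+j}` whenever `i < j`, so `(n+1)! |p_j(n)| ≤ ∑_{i≠j} |p_i(n)|` for all `n`.
The right side is a sum of polynomial values, which is `o((n+1)! p_j(n))` because factorials beat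
every power of `n`; as `p_j(n) ≠ 0` for large `n`, this is absurd.
-/

open Filter Asymptotics Polynomial Finset
open scoped Nat

theorem abs_le_sum_erase_abs_of_sum_eq_zero {ι R : Type*} [DecidableEq ι] [AddCommGroup R]
    [LinearOrder R] [IsOrderedAddMonoid R] {s : Finset ι} {f : ι → R}
    (hf : ∑ i ∈ s, f i = 0) {j : ι} (hj : j ∈ s) : |f j| ≤ ∑ i ∈ s.erase j, |f i| := by
  rw [← add_sum_erase s f hj, add_eq_zero_iff_eq_neg] at hf
  rw [hf, abs_neg]
  exact abs_sum_le_sum_abs f (s.erase j)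

namespace Nat

theorem superFactorial_pos (n : ℕ) : 0 < sf n := by
  rw [← prod_Icc_factorial]
  exact prod_pos fun k _ => factorial_pos k

theorem superFactorial_monotone : Monotone superFactorial :=
  monotone_nat_of_le_succ fun n => by
    rw [superFactorial_succ]
    exact Nat.le_mul_of_pos_left _ (factorial_pos _)

theorem factorial_mul_superFactorial_le {n i j : ℕ} (hij : i < j) :
    (n + 1)! * sf (n + i) ≤ sf (n + j) :=
  calc (n + 1)! * sf (n + i) ≤ (n + i + 1)! * sf (n + i) :=
        Nat.mul_le_mul_right _ (factorial_le (by omega))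
    _ = sf (n + i + 1) := (superFactorial_succ _).symm
    _ ≤ sf (n + j) := superFactorial_monotone (by omega)

end Nat

theorem isLittleO_pow_factorial_succ (D : ℕ) :
    (fun n : ℕ => (n : ℚ) ^ D) =o[atTop] fun n => ((n + 1)! : ℚ) := by
  refine (isLittleO_pow_const_const_pow_of_one_lt D one_lt_two).trans_isBigO
    (IsBigO.of_bound 1 (Eventually.of_forall fun n => ?_))
  have h : 2 ^ n ≤ (n + 1)! := by
    simpa [add_comm] using Nat.factorial_mul_pow_le_factorial (m := 1) (n := n)
  rw [one_mul, ← Rat.norm_cast_real, Real.norm_eq_abs, Real.norm_eq_abs]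
  push_cast
  rw [abs_of_pos (by positivity), abs_of_pos (by positivity)]
  exact_mod_cast h

theorem Polynomial.isLittleO_eval_mul_eval {g : ℕ → ℚ}
    (hg : ∀ D : ℕ, (fun n : ℕ => (n : ℚ) ^ D) =o[atTop] g) {P : ℚ[X]} (hP : P ≠ 0) (Q : ℚ[X]) :
    (fun n : ℕ => Q.eval (n : ℚ)) =o[atTop] fun n => g n * P.eval (n : ℚ) := by
  have hdeg : Q.degree ≤ (X ^ Q.natDegree * P).degree := by
    rw [degree_mul, degree_X_pow]
    exact Q.degree_le_natDegree.trans (le_add_of_nonneg_right (zero_le_degree_iff.mpr hP))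
  refine ((isBigO_atTop_of_degree_le _ _ hdeg).comp_tendsto
    tendsto_natCast_atTop_atTop).trans_isLittleO ?_
  simpa only [Function.comp_def, eval_mul, eval_pow, eval_X] using
    (hg Q.natDegree).mul_isBigO (isBigO_refl (fun n : ℕ => P.eval (n : ℚ)) atTop)

theorem gap_mul_abs_eval_le_sum {u g : ℕ → ℚ} (hu : ∀ n, 0 < u n) (hg_nonneg : ∀ n, 0 ≤ g n)
    (hgap : ∀ n i j, i < j → g n * u (n + i) ≤ u (n + j)) {r : ℕ} {p : Fin (r + 1) → ℚ[X]}
    (hrec : ∀ n : ℕ, ∑ i, (p i).eval (n : ℚ) * u (n + i) = 0) {j : Fin (r + 1)}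
    (htop : ∀ i, j < i → p i = 0) (n : ℕ) :
    g n * |(p j).eval (n : ℚ)| ≤ ∑ i ∈ univ.erase j, |(p i).eval (n : ℚ)| := by
  have hdom := abs_le_sum_erase_abs_of_sum_eq_zero (hrec n) (mem_univ j)
  have hterm : ∀ i ∈ univ.erase j,
      g n * |(p i).eval (n : ℚ) * u (n + i)| ≤ |(p i).eval (n : ℚ)| * u (n + j) := by
    intro i hi
    rcases lt_or_gt_of_ne (ne_of_mem_erase hi) with hij | hji
    · rw [abs_mul, abs_of_pos (hu _), mul_left_comm]
      exact mul_le_mul_of_nonneg_left (hgap n i j hij) (abs_nonneg _)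
    · simp [htop i hji]
  refine le_of_mul_le_mul_right ?_ (hu (n + j))
  calc g n * |(p j).eval (n : ℚ)| * u (n + j) = g n * |(p j).eval (n : ℚ) * u (n + j)| := by
        rw [abs_mul, abs_of_pos (hu _), mul_assoc]
    _ ≤ g n * ∑ i ∈ univ.erase j, |(p i).eval (n : ℚ) * u (n + i)| :=
        mul_le_mul_of_nonneg_left hdom (hg_nonneg n)
    _ ≤ (∑ i ∈ univ.erase j, |(p i).eval (n : ℚ)|) * u (n + j) := by
        rw [mul_sum, sum_mul]
        exact sum_le_sum hterm

theorem not_isPRecursive_of_gap_growth {u g : ℕ → ℚ} (hu : ∀ n, 0 < u n)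
    (hg_nonneg : ∀ n, 0 ≤ g n) (hgap : ∀ n i j, i < j → g n * u (n + i) ≤ u (n + j))
    (hg : ∀ D : ℕ, (fun n : ℕ => (n : ℚ) ^ D) =o[atTop] g) : ¬ IsPRecursive u := by
  rintro ⟨r, p, ⟨i₀, hi₀⟩, hrec⟩
  obtain ⟨j, hj, htop⟩ : ∃ j, p j ≠ 0 ∧ ∀ i, j < i → p i = 0 := by
    obtain ⟨j, hj, hmax⟩ := (univ.filter fun i => p i ≠ 0).exists_max_image id ⟨i₀, by simpa⟩
    refine ⟨j, by simpa using hj, fun i hji => ?_⟩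
    by_contra hi
    exact (hmax i (by simpa)).not_gt hji
  set f := fun n : ℕ => g n * (p j).eval (n : ℚ)
  have hsmall : (fun n : ℕ => ∑ i ∈ univ.erase j, ‖(p i).eval (n : ℚ)‖) =o[atTop] f :=
    IsLittleO.fun_sum fun i _ => (isLittleO_eval_mul_eval hg hj (p i)).norm_left
  have hbig : f =O[atTop] fun n : ℕ => ∑ i ∈ univ.erase j, ‖(p i).eval (n : ℚ)‖ :=
    IsBigO.of_bound 1 (Eventually.of_forall fun n => by
      have h := gap_mul_abs_eval_le_sum hu hg_nonneg hgap hrec htop n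
      rw [← abs_of_nonneg (hg_nonneg n), ← abs_mul] at h
      rw [one_mul, Real.norm_of_nonneg (sum_nonneg fun _ _ => norm_nonneg _)]
      simp only [f, ← Rat.norm_cast_real, Real.norm_eq_abs]
      exact_mod_cast h)
  have hf : ∀ᶠ n in atTop, f n ≠ 0 := by
    -- `1 =o g` makes `g n` eventually nonzero
    filter_upwards [(hg 0).bound one_pos,
      tendsto_natCast_atTop_atTop.eventually (eventually_atTop_not_isRoot _ hj)] with n hgn hpn
    refine mul_ne_zero (fun hg0 => ?_) hpn
    norm_num [hg0] at hgn
  exact isLittleO_irrefl hf.frequently (hbig.trans_isLittleO hsmall)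

/-- **The superfactorials are not P-recursive**: the sequence
`u_n = ∏_{k=1}^n k!` satisfies no nontrivial linear recurrence with polynomial
coefficients. -/
theorem superfactorial_not_pRecursive :
    ¬ IsPRecursive (fun n => ∏ k ∈ Finset.Icc 1 n, (Nat.factorial k : ℚ)) := by
  have hu : (fun n => ∏ k ∈ Icc 1 n, (k ! : ℚ)) = fun n => (sf n : ℚ) := by
    funext n
    exact_mod_cast Nat.prod_Icc_factorial n
  rw [hu]
  refine not_isPRecursive_of_gap_growth (g := fun n => ((n + 1)! : ℚ))
    (fun n => by exact_mod_cast Nat.superFactorial_pos n) (fun n => by positivity)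
    (fun n i j hij => by exact_mod_cast Nat.factorial_mul_superFactorial_le hij)
    isLittleO_pow_factorial_succ
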